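/- Let O be the ring of integers of a finite unramified extension of ℚ_p, with uniformizer p. Let S := O[α₀, α₁, α₂, β₀, β₁, γ₀, γ₁, γ₂, δ₀, δ₁] be a polynomial ring, and define the ideal K₁ := (α₀ + pα₁ + p²α₂ + p³, β₀ + pβ₁, γ₀ + pγ₁ + p²γ₂, δ₀ + pδ₁ + p², β₁, α₂ + p, δ₁ + p, γ₁ + pγ₂, α₁). Let κ ∈ O be arbitrary and define K₂ := (β₁, β₀, δ₁ + 2p, δ₀ − p², α₂, α₁, α₀, (κ−2)γ₁ + 2pγ₂, (κ−1)γ₀ + pγ₁). Then K₁ + K₂ = K₁ + pS. -/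

import Mathlib

/-! Modulo `p`, every generator of `K₁` reduces to one of the variables, so `K₁ + pS` contains
all variables except `γ₂`; every generator of `K₂` is a combination of these variables and `p`,
whence `K₂ ⊆ K₁ + pS`. Conversely `p = (δ₁ + 2p) - (δ₁ + p) ∈ K₁ + K₂`. -/

theorem Ideal.sup_eq_sup_span_singleton_of_le_of_mem {R : Type*} [CommSemiring R]
    {I J : Ideal R} {a : R} (hJ : J ≤ I ⊔ span {a}) (ha : a ∈ I ⊔ J) :
    I ⊔ J = I ⊔ span {a} :=
  le_antisymm (sup_le le_sup_left hJ) (sup_le le_sup_left ((span_singleton_le_iff_mem _).2 ha))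

noncomputable section

section ArmCyclicity

variable (O : Type*) [CommRing O] (p : ℕ) (κ : O)

local notation "SS" => MvPolynomial (Fin 10) O
local notation "pp" => ((p : ℕ) : SS)
local notation "CC" => (MvPolynomial.C : O → SS)
local notation "α₀" => (MvPolynomial.X 0 : SS)
local notation "α₁" => (MvPolynomial.X 1 : SS)
local notation "α₂" => (MvPolynomial.X 2 : SS)
local notation "β₀" => (MvPolynomial.X 3 : SS)
local notation "β₁" => (MvPolynomial.X 4 : SS)
local notation "γ₀" => (MvPolynomial.X 5 : SS)
local notation "γ₁" => (MvPolynomial.X 6 : SS)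
local notation "γ₂" => (MvPolynomial.X 7 : SS)
local notation "δ₀" => (MvPolynomial.X 8 : SS)
local notation "δ₁" => (MvPolynomial.X 9 : SS)

def deformationIdeal₂₁ : Ideal SS :=
  Ideal.span {α₀ + pp * α₁ + pp ^ 2 * α₂ + pp ^ 3, β₀ + pp * β₁, γ₀ + pp * γ₁ + pp ^ 2 * γ₂,
    δ₀ + pp * δ₁ + pp ^ 2, β₁, α₂ + pp, δ₁ + pp, γ₁ + pp * γ₂, α₁}

def deformationIdeal₃₀ : Ideal SS :=
  Ideal.span {β₁, β₀, δ₁ + 2 * pp, δ₀ - pp ^ 2, α₂, α₁, α₀, CC (κ - 2) * γ₁ + 2 * pp * γ₂,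
    CC (κ - 1) * γ₀ + pp * γ₁}

open Ideal MvPolynomial

theorem X_mem_deformationIdeal₂₁_sup_span_singleton {i : Fin 10} (hi : i ≠ 7) :
    X i ∈ deformationIdeal₂₁ O p ⊔ span {pp} := by
  rw [← Quotient.eq_zero_iff_mem]
  have hp : Ideal.Quotient.mk (deformationIdeal₂₁ O p ⊔ span {pp}) pp = 0 :=
    Quotient.eq_zero_iff_mem.2 (mem_sup_right (mem_span_singleton_self _))
  have hK₁ := span_le.1 (le_sup_left : deformationIdeal₂₁ O p ≤ _ ⊔ span {pp})
  simp only [Set.insert_subset_iff, Set.singleton_subset_iff, SetLike.mem_coe,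
    ← Quotient.eq_zero_iff_mem, map_add, map_mul, map_pow, hp, zero_mul, ne_eq,
    OfNat.ofNat_ne_zero, not_false_eq_true, zero_pow, add_zero] at hK₁
  obtain ⟨h₀, h₃, h₅, h₈, h₄, h₂, h₉, h₆, h₁⟩ := hK₁
  fin_cases i
  exacts [h₀, h₁, h₂, h₃, h₄, h₅, h₆, absurd rfl hi, h₈, h₉]

theorem deformationIdeal₃₀_le_of_mem {I : Ideal SS} (hp : pp ∈ I) (hX : ∀ i ≠ 7, X i ∈ I) :
    deformationIdeal₃₀ O p κ ≤ I := by
  rw [deformationIdeal₃₀, span_le]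
  intro x hx
  rw [SetLike.mem_coe, ← Quotient.eq_zero_iff_mem]
  have hp' := Quotient.eq_zero_iff_mem.2 hp
  have hX' : ∀ i : Fin 10, i ≠ 7 → Ideal.Quotient.mk I (X i) = 0 :=
    fun i hi => Quotient.eq_zero_iff_mem.2 (hX i hi)
  simp only [Set.mem_insert_iff, Set.mem_singleton_iff] at hx
  rcases hx with rfl | rfl | rfl | rfl | rfl | rfl | rfl | rfl | rfl <;>
    simp [hp', hX']

theorem p_mem_deformationIdeal₂₁_sup_deformationIdeal₃₀ :
    pp ∈ deformationIdeal₂₁ O p ⊔ deformationIdeal₃₀ O p κ := by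
  have h₁ : δ₁ + pp ∈ deformationIdeal₂₁ O p ⊔ deformationIdeal₃₀ O p κ :=
    mem_sup_left (subset_span (by simp))
  have h₂ : δ₁ + 2 * pp ∈ deformationIdeal₂₁ O p ⊔ deformationIdeal₃₀ O p κ :=
    mem_sup_right (subset_span (by simp))
  simpa [two_mul] using sub_mem h₂ h₁

theorem arm_cyclicity_t21_t30
    (K₁ K₂ : Ideal SS)
    (hK₁ : K₁ = Ideal.span
      {α₀ + pp * α₁ + pp ^ 2 * α₂ + pp ^ 3, β₀ + pp * β₁,
       γ₀ + pp * γ₁ + pp ^ 2 * γ₂, δ₀ + pp * δ₁ + pp ^ 2,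
       β₁, α₂ + pp, δ₁ + pp, γ₁ + pp * γ₂, α₁})
    (hK₂ : K₂ = Ideal.span
      {β₁, β₀, δ₁ + 2 * pp, δ₀ - pp ^ 2, α₂, α₁, α₀,
       CC (κ - 2) * γ₁ + 2 * pp * γ₂,
       CC (κ - 1) * γ₀ + pp * γ₁}) :
    K₁ ⊔ K₂ = K₁ ⊔ Ideal.span {pp} := by
  subst hK₁ hK₂
  exact Ideal.sup_eq_sup_span_singleton_of_le_of_mem
    (deformationIdeal₃₀_le_of_mem O p κ (mem_sup_right (mem_span_singleton_self _))
      fun _ hi => X_mem_deformationIdeal₂₁_sup_span_singleton O p hi)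
    (p_mem_deformationIdeal₂₁_sup_deformationIdeal₃₀ O p κ)

end ArmCyclicity
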